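/- arXiv:1503.04380 — 2 statements merged into one kernel-verified Lean document; each statement's English description precedes it below -/
import Mathlib

section
/- Let T={T_1,...,T_r} be a regular triangular set in K[x_1,...,x_n] with parameter set u, where y_i denotes the leading variable of T_i, and let P ∈ K[u,y_1,...,y_r]. If P is not identically zero on any irreducible component of Zero(sat(T)), then the ideal (P, T_1,...,T_r) has nonzero intersection with K[u]. -/
/-!
Let `𝔭` be a minimal prime of `sat(T)`. No initial lies in `𝔭`, so climbing the triangular
system variable by variable shows that `K[x] ⧸ 𝔭` is algebraic over the image of `K[u]`. As
`P ∉ 𝔭`, the image of `P` divides the image of some `c_𝔭 ∈ K[u] \ 𝔭`, i.e. `c_𝔭 ∈ (P) + 𝔭`.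
The product of the `c_𝔭` then lies in the radical of `(P) + sat(T)`, so some power of it is
multiplied into `(P, T)` by a power of `I_T`. Regularity gives a nonzero `c ∈ K[u]` that is a
multiple of `I_T` modulo `(T)`, and a power of `c` times that power lies in `(P, T) ∩ K[u]`.
-/

open MvPolynomial

namespace Tri

/-- The initial of `f` with respect to the variable `i`: the leading coefficient of `f`
viewed as a univariate polynomial in `x_i`, expressed as a polynomial in the remaining
variables (an element of the same ring). -/
noncomputable def initial {K : Type*} [CommSemiring K] {σ : Type*} [DecidableEq σ]
    (f : MvPolynomial σ K) (i : σ) : MvPolynomial σ K :=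
  ∑ m ∈ f.support.filter (fun m => m i = MvPolynomial.degreeOf i f),
    MvPolynomial.monomial (Finsupp.erase i m) (MvPolynomial.coeff m f)

/-- `x_i` is the leading variable of `f`: it occurs in `f` and is the greatest variable
occurring in `f`. -/
def IsLeadingVar {K : Type*} [CommSemiring K] {n : ℕ} (f : MvPolynomial (Fin n) K)
    (i : Fin n) : Prop :=
  0 < MvPolynomial.degreeOf i f ∧ ∀ j, 0 < MvPolynomial.degreeOf j f → j ≤ i

/-- `T` (with leading variables `lvs`) is a triangular set: the polynomials of `T` are
nonconstant with pairwise distinct, increasing leading variables. -/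
def IsTriangular {K : Type*} [CommSemiring K] {n r : ℕ} (T : Fin r → MvPolynomial (Fin n) K)
    (lvs : Fin r → Fin n) : Prop :=
  StrictMono lvs ∧ ∀ j, IsLeadingVar (T j) (lvs j)

/-- `p` lies in `K[u]` where `u` is the parameter set of a triangular set with leading
variables `lvs`, i.e. no variable of `p` is a leading variable. -/
def inParams {K : Type*} [CommSemiring K] {n r : ℕ} (lvs : Fin r → Fin n)
    (p : MvPolynomial (Fin n) K) : Prop :=
  ∀ i ∈ p.vars, i ∉ Set.range lvs

/-- `T` is a regular triangular set: it is triangular, and for each `i` the ideal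
`(T_1, …, T_{i-1}, ini(T_i))` has nonzero intersection with `K[u]`. -/
def IsRegular {K : Type*} [CommRing K] {n r : ℕ} (T : Fin r → MvPolynomial (Fin n) K)
    (lvs : Fin r → Fin n) : Prop :=
  IsTriangular T lvs ∧
    ∀ i : Fin r, ∃ p ∈ Ideal.span (T '' {j | j < i} ∪ {initial (T i) (lvs i)}),
      p ≠ 0 ∧ inParams lvs p

/-- The product of the initials of a triangular set. -/
noncomputable def initProd {K : Type*} [CommSemiring K] {n r : ℕ}
    (T : Fin r → MvPolynomial (Fin n) K) (lvs : Fin r → Fin n) : MvPolynomial (Fin n) K :=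
  ∏ j, initial (T j) (lvs j)

/-- The saturation `{f | ∃ d, a ^ d * f ∈ J}` of an ideal `J` by an element `a`. -/
def saturationBy {R : Type*} [CommRing R] (J : Ideal R) (a : R) : Ideal R where
  carrier := {f | ∃ d : ℕ, a ^ d * f ∈ J}
  zero_mem' := ⟨0, by simpa using J.zero_mem⟩
  add_mem' := by
    rintro f g ⟨d1, h1⟩ ⟨d2, h2⟩
    refine ⟨d1 + d2, ?_⟩
    have h : a ^ (d1 + d2) * (f + g)
        = a ^ d2 * (a ^ d1 * f) + a ^ d1 * (a ^ d2 * g) := by ring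
    rw [h]
    exact J.add_mem (J.mul_mem_left _ h1) (J.mul_mem_left _ h2)
  smul_mem' := by
    rintro c f ⟨d, h⟩
    exact ⟨d, by rw [smul_eq_mul, mul_left_comm]; exact J.mul_mem_left c h⟩

/-- The saturation ideal `sat(T) = {f | ∃ d, I_T ^ d * f ∈ (T)}` of a triangular set. -/
noncomputable def satIdeal {K : Type*} [CommRing K] {n r : ℕ}
    (T : Fin r → MvPolynomial (Fin n) K) (lvs : Fin r → Fin n) :
    Ideal (MvPolynomial (Fin n) K) :=
  saturationBy (Ideal.span (Set.range T)) (initProd T lvs)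

/-- The zero set `Zero(S/D)` in `E^n` of a system `S` of polynomials together with an
inequation `D ≠ 0`. -/
def zeroSet {K : Type*} [CommSemiring K] {n : ℕ} (E : Type*) [CommSemiring E] [Algebra K E]
    (S : Set (MvPolynomial (Fin n) K)) (D : MvPolynomial (Fin n) K) : Set (Fin n → E) :=
  {x | (∀ f ∈ S, MvPolynomial.aeval x f = 0) ∧ MvPolynomial.aeval x D ≠ 0}

/-- The zero set `Zero(S)` in `E^n` of a system `S` of polynomials. -/
def zeroSet0 {K : Type*} [CommSemiring K] {n : ℕ} (E : Type*) [CommSemiring E] [Algebra K E]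
    (S : Set (MvPolynomial (Fin n) K)) : Set (Fin n → E) :=
  {x | ∀ f ∈ S, MvPolynomial.aeval x f = 0}

/-- The zero set `Zero(I)` in `E^n` of an ideal `I`. -/
def zeroSetI {K : Type*} [CommSemiring K] {n : ℕ} (E : Type*) [CommSemiring E] [Algebra K E]
    (I : Ideal (MvPolynomial (Fin n) K)) : Set (Fin n → E) :=
  {x | ∀ f ∈ I, MvPolynomial.aeval x f = 0}

/-- The Zariski closure in `E^n` of a set `S` (with respect to polynomials over `K`):
the zero set of all polynomials vanishing identically on `S`. -/
def zClosure (K : Type*) [CommSemiring K] {n : ℕ} {E : Type*} [CommSemiring E] [Algebra K E]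
    (S : Set (Fin n → E)) : Set (Fin n → E) :=
  {x | ∀ f : MvPolynomial (Fin n) K, (∀ y ∈ S, MvPolynomial.aeval y f = 0) →
    MvPolynomial.aeval x f = 0}

/-- `P` is not identically zero on any irreducible component of `Zero(I)`; algebraically,
`P` lies in no minimal prime of `I`. -/
def NotIdZeroOnComponents {R : Type*} [CommRing R] (I : Ideal R) (P : R) : Prop :=
  ∀ p ∈ I.minimalPrimes, P ∉ p

/-- An ideal is unmixed if all of its associated primes have the same dimension. -/
def IsUnmixed {R : Type*} [CommRing R] (I : Ideal R) : Prop :=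
  ∀ p ∈ associatedPrimes R (R ⧸ I), ∀ q ∈ associatedPrimes R (R ⧸ I),
    ringKrullDim (R ⧸ p) = ringKrullDim (R ⧸ q)

end Tri

namespace Ideal

variable {R : Type*} [CommRing R]

theorem mem_span_singleton_sup_iff_dvd {x y : R} {I : Ideal R} :
    x ∈ span {y} ⊔ I ↔ Quotient.mk I y ∣ Quotient.mk I x := by
  rw [mem_span_singleton_sup]
  constructor
  · rintro ⟨a, b, hb, rfl⟩
    exact ⟨Quotient.mk I a, by
      rw [map_add, Quotient.eq_zero_iff_mem.2 hb, add_zero, map_mul, mul_comm]⟩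
  · rintro ⟨t, ht⟩
    obtain ⟨a, rfl⟩ := Quotient.mk_surjective t
    refine ⟨a, x - a * y, ?_, by ring⟩
    rw [← Quotient.eq, map_mul, ht, mul_comm]

theorem prod_mem_span_singleton_sup {ι : Type*} (s : Finset ι) {f g : ι → R} {I : Ideal R}
    (h : ∀ i ∈ s, f i ∈ span {g i} ⊔ I) : ∏ i ∈ s, f i ∈ span {∏ i ∈ s, g i} ⊔ I := by
  simp only [mem_span_singleton_sup_iff_dvd, map_prod] at h ⊢
  exact Finset.prod_dvd_prod_of_dvd _ _ h

theorem exists_mem_radical_sup_of_forall_minimalPrimes [IsNoetherianRing R] {J L : Ideal R}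
    {S : Submonoid R} (h : ∀ p ∈ J.minimalPrimes, ∃ c ∈ S, c ∈ L ⊔ p) :
    ∃ c ∈ S, c ∈ (L ⊔ J).radical := by
  classical
  have h' : ∀ p, ∃ c ∈ S, p ∈ J.minimalPrimes → c ∈ L ⊔ p := fun p => by
    by_cases hp : p ∈ J.minimalPrimes
    · obtain ⟨c, hcS, hc⟩ := h p hp
      exact ⟨c, hcS, fun _ => hc⟩
    · exact ⟨1, S.one_mem, fun h => absurd h hp⟩
  choose c hcS hc using h'
  have hfin := J.finite_minimalPrimes_of_isNoetherianRing R
  refine ⟨∏ p ∈ hfin.toFinset, c p, S.prod_mem fun p _ => hcS p, ?_⟩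
  rw [radical_eq_sInf, Submodule.mem_sInf]
  rintro Q ⟨hLJQ, hQ⟩
  obtain ⟨p, hp, hpQ⟩ := exists_minimalPrimes_le (le_sup_right.trans hLJQ)
  exact mem_of_dvd _ (Finset.dvd_prod_of_mem c (hfin.mem_toFinset.2 hp))
    (sup_le (le_sup_left.trans hLJQ) hpQ (hc p hp))

end Ideal

namespace MvPolynomial

variable {σ K S : Type*} [CommSemiring K] [CommSemiring S] [Algebra K S]

theorem degreeOf_pos_of_mem_vars {f : MvPolynomial σ K} {i : σ} (hi : i ∈ f.vars) :
    0 < f.degreeOf i := by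
  obtain ⟨m, hm, him⟩ := (mem_vars_iff_mem_support i).mp hi
  exact (Nat.pos_of_ne_zero (Finsupp.mem_support_iff.mp him)).trans_le
    (monomial_le_degreeOf i hm)

theorem aeval_mem_of_forall_mem_vars (B : Subalgebra K S) {x : σ → S} {g : MvPolynomial σ K}
    (h : ∀ j ∈ g.vars, x j ∈ B) : aeval x g ∈ B := by
  have hg : aeval x g ∈ (supported K (g.vars : Set σ)).map (aeval x) :=
    Subalgebra.mem_map.2 ⟨g, mem_supported.2 subset_rfl, rfl⟩
  rw [supported, AlgHom.map_adjoin, ← Set.image_comp] at hg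
  refine Algebra.adjoin_le ?_ hg
  rintro _ ⟨j, hj, rfl⟩
  simpa using h j hj

theorem aeval_quotientMk_X {K : Type*} [CommRing K] (p : Ideal (MvPolynomial σ K))
    (g : MvPolynomial σ K) : aeval (fun j => Ideal.Quotient.mk p (X j)) g = Ideal.Quotient.mk p g :=
  (congrArg (· g) (aeval_unique (Ideal.Quotient.mkₐ K p))).symm

end MvPolynomial

namespace Tri

section CoeffPow

variable {σ K : Type*} [CommSemiring K]

/-- The coefficient of `x_v ^ k` in `f`, as a polynomial in the other variables. -/
noncomputable def coeffPow (f : MvPolynomial σ K) (v : σ) (k : ℕ) : MvPolynomial σ K :=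
  ∑ m ∈ f.support.filter (fun m => m v = k), monomial (Finsupp.erase v m) (coeff m f)

theorem coeffPow_degreeOf [DecidableEq σ] (f : MvPolynomial σ K) (v : σ) :
    coeffPow f v (f.degreeOf v) = initial f v := rfl

theorem vars_coeffPow_subset [DecidableEq σ] (f : MvPolynomial σ K) (v : σ) (k : ℕ) :
    (coeffPow f v k).vars ⊆ f.vars.erase v := by
  intro j hj
  obtain ⟨m, hm, hjm⟩ := Finset.mem_biUnion.mp (vars_sum_subset _ _ hj)
  have hm' := (Finset.mem_filter.mp hm).1
  rw [vars_monomial (mem_support_iff.mp hm'), Finsupp.support_erase] at hjm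
  obtain ⟨hjv, hjm⟩ := Finset.mem_erase.mp hjm
  exact Finset.mem_erase.mpr ⟨hjv, (mem_vars_iff_mem_support j).mpr ⟨m, hm', hjm⟩⟩

theorem aeval_eq_sum_coeffPow {S : Type*} [CommSemiring S] [Algebra K S]
    (f : MvPolynomial σ K) (v : σ) (x : σ → S) :
    aeval x f = ∑ k ∈ Finset.range (f.degreeOf v + 1), aeval x (coeffPow f v k) * x v ^ k := by
  conv_lhs => rw [f.as_sum]
  rw [map_sum, ← Finset.sum_fiberwise_of_maps_to (g := fun m : σ →₀ ℕ => m v)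
    (t := Finset.range (f.degreeOf v + 1))
    fun m hm => Finset.mem_range.mpr (Nat.lt_succ_of_le (monomial_le_degreeOf v hm))]
  refine Finset.sum_congr rfl fun k _ => ?_
  rw [coeffPow, map_sum, Finset.sum_mul]
  refine Finset.sum_congr rfl fun m hm => ?_
  obtain rfl := (Finset.mem_filter.mp hm).2
  rw [aeval_monomial, aeval_monomial, mul_assoc]
  congr 1
  conv_lhs => rw [← Finsupp.erase_add_single v m]
  rw [Finsupp.prod_add_index' (fun j => pow_zero (x j)) (fun j e₁ e₂ => pow_add (x j) e₁ e₂)]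
  exact congrArg _ (Finsupp.prod_single_index (pow_zero (x v)))

theorem isAlgebraic_of_aeval_eq_zero [DecidableEq σ] {R S : Type*} [CommRing R] [CommRing S]
    [Algebra K R] [Algebra K S] [Algebra R S] [IsScalarTower K R S] (B : Subalgebra R S) {x : σ → S}
    {f : MvPolynomial σ K} {v : σ} (hf : aeval x f = 0)
    (hB : ∀ j ∈ f.vars, j ≠ v → x j ∈ B) (hini : aeval x (initial f v) ≠ 0) :
    IsAlgebraic B (x v) := by
  have hmem : ∀ k, aeval x (coeffPow f v k) ∈ B.restrictScalars K := fun k =>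
    aeval_mem_of_forall_mem_vars _ fun j hj =>
      have hj' := Finset.mem_erase.mp (vars_coeffPow_subset f v k hj)
      hB j hj'.2 hj'.1
  set d := f.degreeOf v
  let q : Polynomial B := ∑ k ∈ Finset.range (d + 1), Polynomial.monomial k ⟨_, hmem k⟩
  refine ⟨q, fun hq => hini ?_, ?_⟩
  · have hd := congrArg (Polynomial.coeff · d) hq
    rw [← coeffPow_degreeOf]
    simpa [q, Polynomial.finsetSum_coeff, Polynomial.coeff_monomial, Subtype.ext_iff] using hd
  · rw [← hf, aeval_eq_sum_coeffPow f v x, map_sum]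
    refine Finset.sum_congr rfl fun k _ => ?_
    rw [Polynomial.aeval_monomial]
    rfl

end CoeffPow

section Saturation

variable {R : Type*} [CommRing R]

theorem le_saturationBy (J : Ideal R) (a : R) : J ≤ saturationBy J a :=
  fun f hf => ⟨0, by simpa using hf⟩

theorem saturationBy_mono {J J' : Ideal R} (a : R) (h : J ≤ J') :
    saturationBy J a ≤ saturationBy J' a :=
  fun _ ⟨d, hd⟩ => ⟨d, h hd⟩

theorem sup_saturationBy_le (L J : Ideal R) (a : R) :
    L ⊔ saturationBy J a ≤ saturationBy (L ⊔ J) a :=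
  sup_le (le_sup_left.trans (le_saturationBy _ a)) (saturationBy_mono a le_sup_right)

theorem saturationBy_le_of_mem_span_singleton_sup {J : Ideal R} {a c : R}
    (h : c ∈ Ideal.span {a} ⊔ J) : saturationBy J a ≤ saturationBy J c := by
  obtain ⟨t, ht⟩ := Ideal.mem_span_singleton_sup_iff_dvd.mp h
  rintro f ⟨d, hd⟩
  refine ⟨d, ?_⟩
  rw [← Ideal.Quotient.eq_zero_iff_mem] at hd ⊢
  rw [map_mul, map_pow, ht, mul_pow, mul_right_comm, ← map_pow, ← map_mul, hd, zero_mul]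

theorem notMem_of_mem_minimalPrimes_saturationBy {J p : Ideal R} {a : R}
    (hp : p ∈ (saturationBy J a).minimalPrimes) : a ∉ p := fun ha => by
  obtain ⟨y, hy, d, hd⟩ := Ideal.exists_mul_mem_of_mem_minimalPrimes hp ha
  exact hy ⟨d + 1, by rwa [pow_succ, mul_assoc]⟩

end Saturation

section Params

variable {K : Type*} [CommRing K] {n r : ℕ}

theorem IsLeadingVar.lt_of_mem_vars {f : MvPolynomial (Fin n) K} {i j : Fin n}
    (hf : IsLeadingVar f i) (hj : j ∈ f.vars) (hji : j ≠ i) : j < i :=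
  lt_of_le_of_ne (hf.2 j (degreeOf_pos_of_mem_vars hj)) hji

theorem inParams_iff_mem_supported {lvs : Fin r → Fin n} {p : MvPolynomial (Fin n) K} :
    inParams lvs p ↔ p ∈ supported K (Set.range lvs)ᶜ := by
  rw [mem_supported]
  rfl

variable (K) in
noncomputable def paramSubmonoid (lvs : Fin r → Fin n) :
    Submonoid (MvPolynomial (Fin n) K) :=
  (supported K (Set.range lvs)ᶜ).toSubmonoid ⊓ nonZeroDivisors _

theorem ne_zero_and_inParams_of_mem_paramSubmonoid [Nontrivial K] {lvs : Fin r → Fin n}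
    {p : MvPolynomial (Fin n) K} (hp : p ∈ paramSubmonoid K lvs) : p ≠ 0 ∧ inParams lvs p :=
  ⟨nonZeroDivisors.ne_zero hp.2, inParams_iff_mem_supported.mpr hp.1⟩

theorem exists_mem_paramSubmonoid_mem_span_initProd_sup [IsDomain K]
    {T : Fin r → MvPolynomial (Fin n) K} {lvs : Fin r → Fin n} (hT : IsRegular T lvs) :
    ∃ c ∈ paramSubmonoid K lvs, c ∈ Ideal.span {initProd T lvs} ⊔ Ideal.span (Set.range T) := by
  choose p hp hp0 hpu using hT.2
  refine ⟨∏ i, p i, prod_mem fun i _ => ⟨inParams_iff_mem_supported.mp (hpu i),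
    mem_nonZeroDivisors_of_ne_zero (hp0 i)⟩, Ideal.prod_mem_span_singleton_sup _ fun i _ => ?_⟩
  refine Ideal.span_le.mpr ?_ (hp i)
  rintro _ (⟨j, -, rfl⟩ | rfl)
  · exact Ideal.mem_sup_right (Ideal.subset_span ⟨j, rfl⟩)
  · exact Ideal.mem_sup_left (Ideal.mem_span_singleton_self _)

end Params

section Algebraic

variable {K Q : Type*} [CommRing K] [CommRing Q] [IsDomain Q] [Algebra K Q] {n r : ℕ}
  {T : Fin r → MvPolynomial (Fin n) K} {lvs : Fin r → Fin n} {x : Fin n → Q}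

theorem isAlgebraic_of_isLeadingVar (hT : ∀ i, IsLeadingVar (T i) (lvs i))
    (hTx : ∀ i, aeval x (T i) = 0) (hini : ∀ i, aeval x (initial (T i) (lvs i)) ≠ 0)
    (j : Fin n) : IsAlgebraic (Algebra.adjoin K (x '' (Set.range lvs)ᶜ)) (x j) := by
  set A := Algebra.adjoin K (x '' (Set.range lvs)ᶜ)
  induction j using WellFoundedLT.induction with
  | ind j ih =>
  by_cases hj : j ∈ Set.range lvs
  · obtain ⟨i, rfl⟩ := hj
    have key : IsAlgebraic (Subalgebra.algebraicClosure A Q) (x (lvs i)) :=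
      isAlgebraic_of_aeval_eq_zero (R := A) _ (hTx i)
        (fun j hj hji => ih j ((hT i).lt_of_mem_vars hj hji)) (hini i)
    exact key.restrictScalars A
  · exact isAlgebraic_algebraMap (⟨x j, Algebra.subset_adjoin ⟨j, hj, rfl⟩⟩ : A)

theorem isAlgebraic_aeval_of_isLeadingVar (hT : ∀ i, IsLeadingVar (T i) (lvs i))
    (hTx : ∀ i, aeval x (T i) = 0) (hini : ∀ i, aeval x (initial (T i) (lvs i)) ≠ 0)
    (g : MvPolynomial (Fin n) K) :
    IsAlgebraic (Algebra.adjoin K (x '' (Set.range lvs)ᶜ)) (aeval x g) :=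
  aeval_mem_of_forall_mem_vars ((Subalgebra.algebraicClosure _ Q).restrictScalars K)
    fun j _ => isAlgebraic_of_isLeadingVar hT hTx hini j

end Algebraic

section MinimalPrimes

variable {K : Type*} [CommRing K] {n r : ℕ} {T : Fin r → MvPolynomial (Fin n) K}
  {lvs : Fin r → Fin n} {p : Ideal (MvPolynomial (Fin n) K)} {P : MvPolynomial (Fin n) K}

theorem exists_param_notMem_mem_span_singleton_sup [p.IsPrime]
    (hT : ∀ i, IsLeadingVar (T i) (lvs i)) (hTp : ∀ i, T i ∈ p)
    (hini : ∀ i, initial (T i) (lvs i) ∉ p) (hP : P ∉ p) :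
    ∃ c ∈ supported K (Set.range lvs)ᶜ, c ∉ p ∧ c ∈ Ideal.span {P} ⊔ p := by
  set x : Fin n → MvPolynomial (Fin n) K ⧸ p := fun j => Ideal.Quotient.mk p (X j)
  have hx : ∀ g, aeval x g = Ideal.Quotient.mk p g := aeval_quotientMk_X p
  have hPalg := isAlgebraic_aeval_of_isLeadingVar hT
    (fun i => by rw [hx, Ideal.Quotient.eq_zero_iff_mem]; exact hTp i)
    (fun i => by rw [hx, Ne, Ideal.Quotient.eq_zero_iff_mem]; exact hini i) P
  rw [hx] at hPalg
  obtain ⟨⟨a, ha⟩, ha0, hPa⟩ := hPalg.exists_nonzero_dvd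
    (mem_nonZeroDivisors_of_ne_zero (by rwa [Ne, Ideal.Quotient.eq_zero_iff_mem]))
  have hadjoin : Algebra.adjoin K (x '' (Set.range lvs)ᶜ) =
      (supported K (Set.range lvs)ᶜ).map (Ideal.Quotient.mkₐ K p) := by
    rw [supported, AlgHom.map_adjoin, ← Set.image_comp]
    rfl
  obtain ⟨c, hc, rfl⟩ := Subalgebra.mem_map.mp (hadjoin ▸ ha)
  refine ⟨c, hc, fun hcp => ha0 (Subtype.ext ?_), Ideal.mem_span_singleton_sup_iff_dvd.mpr hPa⟩
  exact Ideal.Quotient.eq_zero_iff_mem.mpr hcp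

theorem exists_mem_paramSubmonoid_mem_span_singleton_sup [IsDomain K]
    (hT : ∀ i, IsLeadingVar (T i) (lvs i)) (hp : p ∈ (satIdeal T lvs).minimalPrimes)
    (hP : P ∉ p) : ∃ c ∈ paramSubmonoid K lvs, c ∈ Ideal.span {P} ⊔ p := by
  have := hp.1.1
  have hTp : ∀ i, T i ∈ p := fun i =>
    hp.1.2 (le_saturationBy _ _ (Ideal.subset_span ⟨i, rfl⟩))
  have hini : ∀ i, initial (T i) (lvs i) ∉ p := fun i hi =>
    notMem_of_mem_minimalPrimes_saturationBy hp
      (Ideal.mem_of_dvd _ (Finset.dvd_prod_of_mem _ (Finset.mem_univ i)) hi)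
  obtain ⟨c, hc, hcp, hcP⟩ := exists_param_notMem_mem_span_singleton_sup hT hTp hini hP
  exact ⟨c, ⟨hc, mem_nonZeroDivisors_of_ne_zero fun h => hcp (h ▸ p.zero_mem)⟩, hcP⟩

end MinimalPrimes

end Tri

open Tri in
theorem exists_nonzero_param_mem_span_of_notIdZero_general
    {K : Type*} [Field K] {n r : ℕ}
    (T : Fin r → MvPolynomial (Fin n) K) (lvs : Fin r → Fin n)
    (hT : IsRegular T lvs)
    (P : MvPolynomial (Fin n) K)
    (hP : NotIdZeroOnComponents (satIdeal T lvs) P) :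
    ∃ p ∈ Ideal.span ({P} ∪ Set.range T), p ≠ 0 ∧ inParams lvs p := by
  obtain ⟨c₀, hc₀, hc₀T⟩ := exists_mem_paramSubmonoid_mem_span_initProd_sup hT
  obtain ⟨c, hc, m, hcm⟩ := Ideal.exists_mem_radical_sup_of_forall_minimalPrimes fun p hp =>
    exists_mem_paramSubmonoid_mem_span_singleton_sup hT.1.2 hp (hP p hp)
  have hc₀T' : c₀ ∈ Ideal.span {initProd T lvs} ⊔ (Ideal.span {P} ⊔ Ideal.span (Set.range T)) :=
    sup_le_sup_left (le_sup_right (a := Ideal.span {P})) _ hc₀T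
  obtain ⟨d, hd⟩ := saturationBy_le_of_mem_span_singleton_sup hc₀T'
    (sup_saturationBy_le _ _ _ hcm)
  exact ⟨c₀ ^ d * c ^ m, by rwa [Ideal.span_union],
    ne_zero_and_inParams_of_mem_paramSubmonoid (mul_mem (pow_mem hc₀ d) (pow_mem hc m))⟩

open Tri in
/-- If `T` is a regular triangular set and `P` is not identically zero on any irreducible
component of `Zero(sat(T))`, then the ideal `(P, T_1, …, T_r)` has nonzero intersection
with `K[u]`, where `u` is the parameter set of `T`. -/
theorem exists_nonzero_param_mem_span_of_notIdZero
    {K : Type*} [Field K] [CharZero K] {n r : ℕ}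
    (T : Fin r → MvPolynomial (Fin n) K) (lvs : Fin r → Fin n)
    (hT : IsRegular T lvs)
    (P : MvPolynomial (Fin n) K)
    (hP : NotIdZeroOnComponents (satIdeal T lvs) P) :
    ∃ p ∈ Ideal.span ({P} ∪ Set.range T), p ≠ 0 ∧ inParams lvs p :=
  exists_nonzero_param_mem_span_of_notIdZero_general T lvs hT P hP
end

section
/- Let T={T_1,...,T_r} be a regular triangular set in K[x_1,...,x_n]. If M ∈ K[x_1,...,x_n] is not identically zero on any irreducible component of Zero(sat(T)), then Zero(sat(T)) equals the Zariski closure of Zero(T/I_T), which equals the Zariski closure of Zero(T/M·I_T). -/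
open MvPolynomial

/-!
Outside `Zero(I_T)`, a polynomial `f` vanishes on `Zero(T)` exactly when `I_T · f` does, so by the
Nullstellensatz (over `K`, with points in `E`) the polynomials vanishing on `Zero(T/I_T)` form
the radical of `sat(T)`; its zero set is `Zero(sat(T))`. Removing `Zero(M)` as well does not
change this vanishing ideal, because `M` avoids every minimal prime of the radical ideal
`√sat(T)`, so `M · f ∈ √sat(T)` forces `f ∈ √sat(T)`.
-/

theorem Ideal.mem_radical_of_mul_mem_radical {R : Type*} [CommRing R] {I : Ideal R} {a b : R}
    (ha : ∀ p ∈ I.minimalPrimes, a ∉ p) (hab : a * b ∈ I.radical) : b ∈ I.radical := by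
  rw [← Ideal.sInf_minimalPrimes, Submodule.mem_sInf] at hab ⊢
  exact fun p hp => (hp.1.1.mem_or_mem (hab p hp)).resolve_left (ha p hp)

namespace MvPolynomial

variable {k K σ : Type*} [Field k] [Field K] [Algebra k K]

theorem zeroLocus_radical (I : Ideal (MvPolynomial σ k)) :
    zeroLocus K I.radical = zeroLocus K I := by
  refine (zeroLocus_anti_mono I.le_radical).antisymm fun x hx p ⟨m, hm⟩ => ?_
  exact IsNilpotent.eq_zero ⟨m, by rw [← map_pow]; exact hx _ hm⟩

theorem isRadical_vanishingIdeal (V : Set (σ → K)) : (vanishingIdeal k V).IsRadical :=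
  fun p ⟨m, hm⟩ x hx => IsNilpotent.eq_zero ⟨m, by rw [← map_pow]; exact hm x hx⟩

theorem mem_vanishingIdeal_diff_iff {V : Set (σ → K)} {g p : MvPolynomial σ k} :
    p ∈ vanishingIdeal k (V \ {x | aeval x g = 0}) ↔ g * p ∈ vanishingIdeal k V := by
  simp only [mem_vanishingIdeal_iff, Set.mem_sdiff, Set.mem_ofPred_eq, map_mul, mul_eq_zero,
    and_imp]
  exact forall_congr' fun x => forall_congr' fun _ => by tauto

theorem vanishingIdeal_diff_eq_of_notMem_minimalPrimes {V : Set (σ → K)}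
    {g : MvPolynomial σ k} (hg : ∀ p ∈ (vanishingIdeal k V).minimalPrimes, g ∉ p) :
    vanishingIdeal k (V \ {x | aeval x g = 0}) = vanishingIdeal k V := by
  ext p
  rw [mem_vanishingIdeal_diff_iff]
  refine ⟨fun h => ?_, fun h => Ideal.mul_mem_left _ g h⟩
  rw [← (isRadical_vanishingIdeal V).radical] at h ⊢
  exact Ideal.mem_radical_of_mul_mem_radical hg h

end MvPolynomial

namespace Tri

theorem mul_mem_radical_iff_mem_radical_saturationBy {R : Type*} [CommRing R] {J : Ideal R}
    {a b : R} : a * b ∈ J.radical ↔ b ∈ (saturationBy J a).radical := by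
  constructor
  · rintro ⟨m, hm⟩
    exact ⟨m, m, by rwa [← mul_pow]⟩
  · rintro ⟨m, d, hd⟩
    refine ⟨d + m, ?_⟩
    have hsplit : (a * b) ^ (d + m) = a ^ m * b ^ d * (a ^ d * b ^ m) := by ring
    rw [hsplit]
    exact J.mul_mem_left _ hd

theorem vanishingIdeal_zeroLocus_diff {k K σ : Type*} [Field k] [Field K] [Algebra k K]
    [IsAlgClosed K] [Finite σ] (J : Ideal (MvPolynomial σ k)) (a : MvPolynomial σ k) :
    vanishingIdeal k (zeroLocus K J \ {x | aeval x a = 0}) = (saturationBy J a).radical := by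
  ext f
  rw [mem_vanishingIdeal_diff_iff, vanishingIdeal_zeroLocus_eq_radical,
    mul_mem_radical_iff_mem_radical_saturationBy]

theorem zeroSet_eq_zeroLocus_diff {K : Type*} [Field K] {n : ℕ} (E : Type*) [Field E]
    [Algebra K E] (S : Set (MvPolynomial (Fin n) K)) (D : MvPolynomial (Fin n) K) :
    zeroSet E S D = zeroLocus E (Ideal.span S) \ {x | aeval x D = 0} := by
  rw [zeroLocus_span]
  rfl

theorem zeroSet_mul {K : Type*} [Field K] {n : ℕ} (E : Type*) [Field E]
    [Algebra K E] (S : Set (MvPolynomial (Fin n) K)) (M D : MvPolynomial (Fin n) K) :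
    zeroSet E S (M * D) = zeroSet E S D \ {x | aeval x M = 0} := by
  ext x
  simp only [zeroSet, Set.mem_sdiff, Set.mem_ofPred_eq, map_mul, ne_eq, mul_eq_zero, not_or]
  tauto

end Tri

open Tri in
theorem zeroSetI_satIdeal_eq_zClosure_general
    {K : Type*} [Field K] (E : Type*) [Field E] [IsAlgClosed E] [Algebra K E]
    {n r : ℕ}
    (T : Fin r → MvPolynomial (Fin n) K) (lvs : Fin r → Fin n)
    (M : MvPolynomial (Fin n) K)
    (hM : NotIdZeroOnComponents (satIdeal T lvs) M) :
    zeroSetI E (satIdeal T lvs) = zClosure K (zeroSet E (Set.range T) (initProd T lvs)) ∧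
    zClosure K (zeroSet E (Set.range T) (initProd T lvs))
      = zClosure K (zeroSet E (Set.range T) (M * initProd T lvs)) := by
  have hvanishing : vanishingIdeal K (zeroSet E (Set.range T) (initProd T lvs))
      = (satIdeal T lvs).radical := by
    rw [zeroSet_eq_zeroLocus_diff, vanishingIdeal_zeroLocus_diff]
    rfl
  have hM' : ∀ p ∈ (vanishingIdeal K (zeroSet E (Set.range T) (initProd T lvs))).minimalPrimes,
      M ∉ p := by
    rwa [hvanishing, Ideal.radical_minimalPrimes]
  refine ⟨?_, ?_⟩
  · change zeroLocus E _ = zeroLocus E (vanishingIdeal K _)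
    rw [hvanishing, zeroLocus_radical]
  · change zeroLocus E (vanishingIdeal K _) = zeroLocus E (vanishingIdeal K _)
    rw [zeroSet_mul, vanishingIdeal_diff_eq_of_notMem_minimalPrimes hM']

open Tri in
/-- If `T` is a regular triangular set and `M` is not identically zero on any irreducible
component of `Zero(sat(T))`, then `Zero(sat(T))` equals the Zariski closure of
`Zero(T/I_T)`, which equals the Zariski closure of `Zero(T/M·I_T)`. -/
theorem zeroSetI_satIdeal_eq_zClosure
    {K : Type*} [Field K] [CharZero K] (E : Type*) [Field E] [IsAlgClosed E] [Algebra K E]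
    {n r : ℕ}
    (T : Fin r → MvPolynomial (Fin n) K) (lvs : Fin r → Fin n)
    (hT : IsRegular T lvs)
    (M : MvPolynomial (Fin n) K)
    (hM : NotIdZeroOnComponents (satIdeal T lvs) M) :
    zeroSetI E (satIdeal T lvs) = zClosure K (zeroSet E (Set.range T) (initProd T lvs)) ∧
    zClosure K (zeroSet E (Set.range T) (initProd T lvs))
      = zClosure K (zeroSet E (Set.range T) (M * initProd T lvs)) :=
  zeroSetI_satIdeal_eq_zClosure_general E T lvs M hM
end
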